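/- For natural numbers n, k ≥ 1 and real x ≠ 0, consider the series ∑_{j=0}^{∞} (1/j!) · C(jk, n) · x^{jk-n}, where C(jk, n) is the binomial coefficient (equal to 0 when jk < n). Every term with jk < n vanishes because C(jk,n) = 0, and as x → 0 the series tends to 1/(n/k)! if k ∣ n, and to 0 if k ∤ n. -/
import Mathlib


open Filter Topology

lemma aux_choose_le_two_pow (m n : ℕ) : Nat.choose m n ≤ 2 ^ m := by
  rcases le_or_gt n m with h | h
  · calc Nat.choose m n ≤ ∑ i ∈ Finset.range (m + 1), Nat.choose m i :=
          Finset.single_le_sum (fun i _ => Nat.zero_le _)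
            (Finset.mem_range.mpr (Nat.lt_succ_of_le h))
      _ = 2 ^ m := Nat.sum_range_choose m
  · simp [Nat.choose_eq_zero_of_lt h]

theorem limit_of_divisor_detecting_series (n k : ℕ) (hn : 1 ≤ n) (hk : 1 ≤ k) :
    (∀ j : ℕ, j * k < n → Nat.choose (j * k) n = 0) ∧
      Filter.Tendsto
        (fun x : ℝ => ∑' j : ℕ,
          ((j.factorial : ℝ))⁻¹ * (Nat.choose (j * k) n : ℝ) * x ^ (j * k - n))
        (nhdsWithin 0 {0}ᶜ)
        (nhds (if k ∣ n then (((n / k).factorial : ℝ))⁻¹ else 0)) := by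
  refine ⟨fun j hj => Nat.choose_eq_zero_of_lt hj, ?_⟩
  set g : ℕ → ℝ := fun j =>
    ((j.factorial : ℝ))⁻¹ * (Nat.choose (j * k) n : ℝ) * (0 : ℝ) ^ (j * k - n) with hg
  have key : Tendsto
      (fun x : ℝ => ∑' j : ℕ,
        ((j.factorial : ℝ))⁻¹ * (Nat.choose (j * k) n : ℝ) * x ^ (j * k - n))
      (nhdsWithin 0 {0}ᶜ) (nhds (∑' j, g j)) := by
    apply tendsto_tsum_of_dominated_convergence
      (bound := fun j : ℕ => ((2 : ℝ) ^ k) ^ j / j.factorial)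
    · exact Real.summable_pow_div_factorial _
    · intro j
      have hc : Continuous (fun x : ℝ =>
          ((j.factorial : ℝ))⁻¹ * (Nat.choose (j * k) n : ℝ) * x ^ (j * k - n)) := by
        continuity
      exact (hc.tendsto 0).mono_left nhdsWithin_le_nhds
    · have hball : Metric.ball (0 : ℝ) 1 ∈ nhdsWithin (0 : ℝ) {0}ᶜ :=
        nhdsWithin_le_nhds (Metric.ball_mem_nhds 0 one_pos)
      filter_upwards [hball] with x hx j
      have hx1 : |x| ≤ 1 := by
        rw [Metric.mem_ball, Real.dist_eq, sub_zero] at hx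
        exact hx.le
      have h1 : ‖((j.factorial : ℝ))⁻¹ * (Nat.choose (j * k) n : ℝ) * x ^ (j * k - n)‖
          ≤ ((j.factorial : ℝ))⁻¹ * (Nat.choose (j * k) n : ℝ) := by
        rw [norm_mul, norm_mul]
        have : ‖x ^ (j * k - n)‖ ≤ 1 := by
          rw [norm_pow]
          exact pow_le_one₀ (norm_nonneg x) hx1
        calc ‖((j.factorial : ℝ))⁻¹‖ * ‖(Nat.choose (j * k) n : ℝ)‖ * ‖x ^ (j * k - n)‖
            ≤ ‖((j.factorial : ℝ))⁻¹‖ * ‖(Nat.choose (j * k) n : ℝ)‖ * 1 := by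
              apply mul_le_mul_of_nonneg_left this (by positivity)
          _ = ((j.factorial : ℝ))⁻¹ * (Nat.choose (j * k) n : ℝ) := by
              rw [mul_one, Real.norm_eq_abs, Real.norm_eq_abs, abs_of_nonneg (by positivity),
                abs_of_nonneg (by positivity)]
      refine h1.trans ?_
      have h2 : (Nat.choose (j * k) n : ℝ) ≤ ((2 : ℝ) ^ k) ^ j := by
        rw [← pow_mul, mul_comm k j]
        exact_mod_cast aux_choose_le_two_pow (j * k) n
      calc ((j.factorial : ℝ))⁻¹ * (Nat.choose (j * k) n : ℝ)
          ≤ ((j.factorial : ℝ))⁻¹ * ((2 : ℝ) ^ k) ^ j := by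
            apply mul_le_mul_of_nonneg_left h2 (by positivity)
        _ = ((2 : ℝ) ^ k) ^ j / j.factorial := by ring
  have hsum : (∑' j, g j) = (if k ∣ n then (((n / k).factorial : ℝ))⁻¹ else 0) := by
    by_cases hdvd : k ∣ n
    · rw [if_pos hdvd]
      have hjk : (n / k) * k = n := Nat.div_mul_cancel hdvd
      rw [tsum_eq_single (n / k)]
      · simp [g, hjk]
      · intro j hj
        rcases lt_trichotomy (j * k) n with h | h | h
        · simp [g, Nat.choose_eq_zero_of_lt h]
        · exfalso
          apply hj
          have : j * k = (n / k) * k := by rw [hjk, h]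
          exact Nat.eq_of_mul_eq_mul_right hk this
        · have : j * k - n ≠ 0 := Nat.sub_ne_zero_of_lt h
          simp [g, zero_pow this]
    · rw [if_neg hdvd]
      have : ∀ j, g j = 0 := by
        intro j
        rcases lt_trichotomy (j * k) n with h | h | h
        · simp [g, Nat.choose_eq_zero_of_lt h]
        · exact absurd (Dvd.intro j (by rw [mul_comm]; exact h)) hdvd
        · have : j * k - n ≠ 0 := Nat.sub_ne_zero_of_lt h
          simp [g, zero_pow this]
      simp [this]
  rwa [hsum] at key
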